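/- arXiv:2405.03888 — 3 statements merged into one kernel-verified Lean document; each statement's English description precedes it below -/
import Mathlib

section
/- Suppose Q is a strongly continuous stochastic kernel from S × U to S, meaning (s,u) ↦ ∫ g(s') Q(ds'|s,u) is continuous and bounded for every bounded measurable g. If (νₙ, φₙ) is a sequence of (probability measure, kernel) pairs such that the induced joint measures converge weakly to that of (ν, φ), then F(νₙ, φₙ) converges setwise to F(ν, φ), where F(ν,φ)(·) = ∫_S ∫_U Q(·|s,u) φ(du|s) dν(s). In particular, the deterministic transition map F is weakly continuous, i.e., ∫ g(μ) q̄(dμ|ν,φ) = g(F(ν,φ)) is continuous in (ν,φ) for every bounded continuous g on the space of probability measures, where q̄ is the Dirac kernel concentrated at F(ν,φ). -/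
open MeasureTheory ProbabilityTheory Filter
open scoped ENNReal

/-!
A strongly continuous kernel `Q` turns the indicator of a measurable set `A` into the bounded
continuous test function `p ↦ Q(A | p)`, and `F(ν, φ)(A)` is the integral of that test function
against `ν ⊗ φ`. Weak convergence of the joint measures therefore gives convergence of
`F(νₙ, φₙ)(A)`, which is setwise convergence.
-/

lemma continuous_measureReal_of_continuous_integral {Z Y : Type*} [TopologicalSpace Z]
    [MeasurableSpace Z] [MeasurableSpace Y] (κ : Kernel Z Y)
    (hκ : ∀ g : Y → ℝ, Measurable g → (∃ C : ℝ, ∀ y, |g y| ≤ C) →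
      Continuous (fun z => ∫ y, g y ∂(κ z)))
    {A : Set Y} (hA : MeasurableSet A) :
    Continuous (fun z => (κ z).real A) := by
  have hbound : ∀ y, |A.indicator (1 : Y → ℝ) y| ≤ 1 := fun y => by
    by_cases hy : y ∈ A <;> simp [hy]
  exact (hκ (A.indicator 1) (measurable_const.indicator hA) ⟨1, hbound⟩).congr
    fun z => integral_indicator_one hA

lemma MeasureTheory.Measure.comp_real_eq_integral {X Y : Type*}
    [MeasurableSpace X] [MeasurableSpace Y]
    (μ : Measure X) (κ : Kernel X Y) [IsFiniteKernel κ] {A : Set Y} (hA : MeasurableSet A) :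
    (κ ∘ₘ μ).real A = ∫ x, (κ x).real A ∂μ := by
  rw [measureReal_def, Measure.bind_apply hA κ.aemeasurable]
  exact (integral_toReal (κ.measurable_coe hA).aemeasurable
    (ae_of_all _ fun x => measure_lt_top _ _)).symm

lemma tendsto_comp_apply_of_continuous_measureReal {X Y ι : Type*} [TopologicalSpace X]
    [MeasurableSpace X] [MeasurableSpace Y] {l : Filter ι}
    (κ : Kernel X Y) [IsFiniteKernel κ] {A : Set Y} (hA : MeasurableSet A)
    (hκA : Continuous (fun x => (κ x).real A))
    (μ : Measure X) [IsFiniteMeasure μ] (μs : ι → Measure X) [∀ i, IsFiniteMeasure (μs i)]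
    (hweak : ∀ g : X → ℝ, Continuous g → (∃ C : ℝ, ∀ x, |g x| ≤ C) →
      Tendsto (fun i => ∫ x, g x ∂(μs i)) l (nhds (∫ x, g x ∂μ))) :
    Tendsto (fun i => (κ ∘ₘ μs i) A) l (nhds ((κ ∘ₘ μ) A)) := by
  have hbound : ∀ x, |(κ x).real A| ≤ κ.bound.toReal := fun x => by
    rw [abs_of_nonneg measureReal_nonneg]
    exact ENNReal.toReal_mono κ.bound_ne_top (κ.measure_le_bound x A)
  rw [← ENNReal.tendsto_toReal_iff (fun i => measure_ne_top _ _) (measure_ne_top _ _)]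
  simpa only [← measureReal_def, Measure.comp_real_eq_integral _ κ hA] using
    hweak _ hκA ⟨_, hbound⟩

theorem stmt4_general {S U : Type*}
    [TopologicalSpace S] [MeasurableSpace S]
    [TopologicalSpace U] [MeasurableSpace U]
    (Q : Kernel (S × U) S) [IsMarkovKernel Q]
    (hQ : ∀ g : S → ℝ, Measurable g → (∃ C : ℝ, ∀ x, |g x| ≤ C) →
      Continuous (fun p : S × U => ∫ s', g s' ∂(Q p)))
    (ν : Measure S) [IsProbabilityMeasure ν] (φ : Kernel S U) [IsMarkovKernel φ]
    (νs : ℕ → Measure S) [∀ n, IsProbabilityMeasure (νs n)]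
    (φs : ℕ → Kernel S U) [∀ n, IsMarkovKernel (φs n)]
    (hweak : ∀ g : S × U → ℝ, Continuous g → (∃ C : ℝ, ∀ p, |g p| ≤ C) →
      Tendsto (fun n => ∫ p, g p ∂((νs n).compProd (φs n))) atTop
        (nhds (∫ p, g p ∂(ν.compProd φ)))) :
    ∀ A : Set S, MeasurableSet A →
      Tendsto (fun n => ((νs n).compProd (φs n)).bind (fun p => Q p) A) atTop
        (nhds ((ν.compProd φ).bind (fun p => Q p) A)) := fun A hA =>
  tendsto_comp_apply_of_continuous_measureReal Q hA
    (continuous_measureReal_of_continuous_integral Q hQ hA) _ _ hweak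

/-- If `Q` is a strongly continuous stochastic kernel (the map
`(s,u) ↦ ∫ g dQ(·|s,u)` is continuous for every bounded measurable `g`) and the
joint measures `νₙ ⊗ φₙ` converge weakly to `ν ⊗ φ`, then the measurized
transitions `F(νₙ, φₙ)` converge setwise to `F(ν, φ)`, where
`F(ν,φ) = (ν ⊗ φ).bind Q`. -/
theorem stmt4 {S U : Type*}
    [TopologicalSpace S] [MeasurableSpace S] [BorelSpace S]
    [TopologicalSpace U] [MeasurableSpace U] [BorelSpace U]
    (Q : Kernel (S × U) S) [IsMarkovKernel Q]
    (hQ : ∀ g : S → ℝ, Measurable g → (∃ C : ℝ, ∀ x, |g x| ≤ C) →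
      Continuous (fun p : S × U => ∫ s', g s' ∂(Q p)))
    (ν : Measure S) [IsProbabilityMeasure ν] (φ : Kernel S U) [IsMarkovKernel φ]
    (νs : ℕ → Measure S) [∀ n, IsProbabilityMeasure (νs n)]
    (φs : ℕ → Kernel S U) [∀ n, IsMarkovKernel (φs n)]
    (hweak : ∀ g : S × U → ℝ, Continuous g → (∃ C : ℝ, ∀ p, |g p| ≤ C) →
      Tendsto (fun n => ∫ p, g p ∂((νs n).compProd (φs n))) atTop
        (nhds (∫ p, g p ∂(ν.compProd φ)))) :
    ∀ A : Set S, MeasurableSet A →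
      Tendsto (fun n => ((νs n).compProd (φs n)).bind (fun p => Q p) A) atTop
        (nhds ((ν.compProd φ).bind (fun p => Q p) A)) :=
  stmt4_general Q hQ ν φ νs φs hweak
end

section
/- Suppose V* : S → ℝ is bounded measurable and satisfies the discounted optimality equation V*(s) = sup_{u ∈ U(s)} { r(s,u) + α ∫ V*(s') Q(ds'|s,u) } for all s, with the supremum attained by a measurable selector f*. Define V̄*(ν) = ∫_S V* dν. Then for every probability measure ν on S, V̄*(ν) = sup_{φ ∈ Φ} { r̄(ν,φ) + α V̄*(F(ν,φ)) }, where Φ is the set of stochastic kernels φ with φ(U(s)|s) = 1 for all s, r̄(ν,φ) = ∫∫ r dφ dν, and F(ν,φ) is the measurized transition; moreover the supremum is attained by the kernel φ* concentrated on f*, i.e., φ*(·|s) = δ_{f*(s)}, independently of ν. -/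
/-!
Both sides only see the joint state–action law `ν ⊗ₘ φ`: `r̄(ν,φ) = ∫ r d(ν ⊗ₘ φ)` and
`F(ν,φ) = Q ∘ₘ (ν ⊗ₘ φ)`, so `r̄(ν,φ) + α V̄*(F(ν,φ))` is the integral against `ν ⊗ₘ φ` of the
action value `r(s,u) + α ∫ V* dQ(·|s,u)`. Since `φ(·|s)` lives on `U(s)`, where the action value is
at most `V*(s)` by the optimality equation, this integral is at most `∫ V* dν`. For `φ* = δ_{f*}`
the joint law is the image of `ν` under `s ↦ (s, f*(s))`, on which the action value equals `V*`.
-/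

open MeasureTheory ProbabilityTheory

/-- The measurized (deterministic) transition. -/
noncomputable def measurizedF {S U : Type*} [MeasurableSpace S] [MeasurableSpace U]
    (Q : Kernel (S × U) S) (φ : Kernel S U) (ν : Measure S) : Measure S :=
  ν.bind (fun s => (φ s).bind (fun u => Q (s, u)))

/-- The measurized reward `r̄(ν, φ)`. -/
noncomputable def measurizedReward {S U : Type*} [MeasurableSpace S] [MeasurableSpace U]
    (r : S × U → ℝ) (φ : Kernel S U) (ν : Measure S) : ℝ :=
  ∫ s, ∫ u, r (s, u) ∂(φ s) ∂ν

namespace MeasureTheory.Measure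

variable {α β E : Type*} {mα : MeasurableSpace α} {mβ : MeasurableSpace β}
  [NormedAddCommGroup E] [NormedSpace ℝ E] {μ : Measure α} {κ : Kernel α β}

lemma integral_comp [SFinite μ] [IsSFiniteKernel κ] {f : β → E}
    (hf : Integrable f (κ ∘ₘ μ)) : ∫ y, f y ∂(κ ∘ₘ μ) = ∫ x, ∫ y, f y ∂(κ x) ∂μ := by
  have hf_snd : AEStronglyMeasurable f ((μ ⊗ₘ κ).map Prod.snd) := by
    rw [← snd, snd_compProd]
    exact hf.1
  rw [← integral_compProd ((integrable_compProd_snd_iff hf.1).2 hf), ← snd_compProd μ κ, snd,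
    integral_map measurable_snd.aemeasurable hf_snd]

end MeasureTheory.Measure

lemma integrable_of_abs_le {α : Type*} {_ : MeasurableSpace α} {μ : Measure α}
    [IsFiniteMeasure μ] {f : α → ℝ} (hf : Measurable f) {C : ℝ} (hC : ∀ x, |f x| ≤ C) :
    Integrable f μ :=
  .of_bound hf.aestronglyMeasurable C (ae_of_all _ fun x => (Real.norm_eq_abs _).trans_le (hC x))

lemma abs_integral_le_of_abs_le {α : Type*} {_ : MeasurableSpace α} {μ : Measure α}
    [IsProbabilityMeasure μ] {f : α → ℝ} {C : ℝ} (hC : ∀ x, |f x| ≤ C) :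
    |∫ x, f x ∂μ| ≤ C := by
  simpa using norm_integral_le_of_norm_le_const (μ := μ)
    (ae_of_all _ fun x => (Real.norm_eq_abs _).trans_le (hC x))

section Measurized

variable {S U : Type*} [MeasurableSpace S] [MeasurableSpace U]

lemma measurizedF_eq_comp_compProd (Q : Kernel (S × U) S) [IsSFiniteKernel Q] (φ : Kernel S U)
    [IsSFiniteKernel φ] (ν : Measure S) [SFinite ν] :
    measurizedF Q φ ν = Q ∘ₘ (ν ⊗ₘ φ) := by
  have hsnd : ∀ s, (φ ⊗ₖ Q).snd s = (φ s).bind (fun u => Q (s, u)) := by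
    intro s
    ext t ht
    rw [Kernel.snd_apply' _ _ ht, Kernel.compProd_apply (measurable_snd ht),
      Measure.bind_apply ht (f := fun u => Q (s, u))
        (Q.measurable.comp measurable_prodMk_left).aemeasurable]
    rfl
  rw [Measure.comp_compProd_comm, measurizedF, ← funext hsnd, Measure.snd,
    Measure.map_comp _ _ measurable_snd, Kernel.snd_eq]

lemma measurizedReward_eq_integral_compProd (r : S × U → ℝ) (φ : Kernel S U) [IsSFiniteKernel φ]
    (ν : Measure S) [SFinite ν] (hr : Integrable r (ν ⊗ₘ φ)) :
    measurizedReward r φ ν = ∫ p, r p ∂(ν ⊗ₘ φ) :=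
  (Measure.integral_compProd hr).symm

noncomputable def actionValue (r : S × U → ℝ) (Q : Kernel (S × U) S) (α : ℝ) (V : S → ℝ)
    (p : S × U) : ℝ :=
  r p + α * ∫ s, V s ∂(Q p)

section ActionValue

variable {r : S × U → ℝ} {Q : Kernel (S × U) S} {V : S → ℝ}

lemma measurable_actionValue (hrm : Measurable r) (hVm : Measurable V) (α : ℝ) :
    Measurable (actionValue r Q α V) :=
  hrm.add ((hVm.stronglyMeasurable.integral_kernel (κ := Q)).measurable.const_mul α)

lemma abs_actionValue_le [IsMarkovKernel Q] {C CV : ℝ} (hrb : ∀ p, |r p| ≤ C)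
    (hVb : ∀ s, |V s| ≤ CV) (α : ℝ) (p : S × U) :
    |actionValue r Q α V p| ≤ C + |α| * CV :=
  calc |actionValue r Q α V p| ≤ |r p| + |α| * |∫ s, V s ∂(Q p)| :=
        (abs_add_le _ _).trans_eq (by rw [abs_mul])
    _ ≤ C + |α| * CV := by gcongr; exacts [hrb p, abs_integral_le_of_abs_le hVb]

lemma measurizedReward_add_integral_measurizedF [IsMarkovKernel Q] (φ : Kernel S U)
    [IsMarkovKernel φ] (ν : Measure S) [IsFiniteMeasure ν] (hrm : Measurable r) {C : ℝ}
    (hrb : ∀ p, |r p| ≤ C) (hVm : Measurable V) {CV : ℝ} (hVb : ∀ s, |V s| ≤ CV) (α : ℝ) :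
    measurizedReward r φ ν + α * ∫ s, V s ∂(measurizedF Q φ ν)
      = ∫ p, actionValue r Q α V p ∂(ν ⊗ₘ φ) := by
  have hr : Integrable r (ν ⊗ₘ φ) := integrable_of_abs_le hrm hrb
  have hw : Integrable (fun p => ∫ s, V s ∂(Q p)) (ν ⊗ₘ φ) :=
    integrable_of_abs_le (hVm.stronglyMeasurable.integral_kernel (κ := Q)).measurable
      fun _ => abs_integral_le_of_abs_le hVb
  rw [measurizedReward_eq_integral_compProd r φ ν hr, measurizedF_eq_comp_compProd,
    Measure.integral_comp (integrable_of_abs_le hVm hVb), ← integral_const_mul,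
    ← integral_add hr (hw.const_mul α)]
  rfl

end ActionValue

lemma integral_compProd_le_of_forall_mem {ν : Measure S} [SFinite ν] {φ : Kernel S U}
    [IsMarkovKernel φ] {A : S → Set U} (hA : ∀ s, MeasurableSet (A s))
    (hφA : ∀ s, φ s (A s) = 1) {G : S × U → ℝ} {V : S → ℝ} (hGm : Measurable G)
    (hVm : Measurable V) (hG : Integrable G (ν ⊗ₘ φ)) (hV : Integrable V ν)
    (hGV : ∀ s, ∀ u ∈ A s, G (s, u) ≤ V s) :
    ∫ p, G p ∂(ν ⊗ₘ φ) ≤ ∫ s, V s ∂ν := by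
  rw [← Measure.fst_compProd ν φ] at hV
  have hV_fst : ∫ s, V s ∂ν = ∫ p, V p.1 ∂(ν ⊗ₘ φ) := by
    rw [← integral_map measurable_fst.aemeasurable hVm.aestronglyMeasurable, ← Measure.fst,
      Measure.fst_compProd]
  rw [hV_fst]
  refine integral_mono_ae hG (hV.comp_measurable measurable_fst)
    (Measure.ae_compProd_of_ae_ae (measurableSet_le hGm (hVm.comp measurable_fst))
      (ae_of_all _ fun s => ?_))
  filter_upwards [(mem_ae_iff_prob_eq_one (hA s)).2 (hφA s)] with u hu using hGV s u hu

end Measurized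

theorem stmt8_general {S U : Type*} [MeasurableSpace S] [MeasurableSpace U]
    (Q : Kernel (S × U) S) [IsMarkovKernel Q]
    (Uset : S → Set U) (hUm : ∀ s, MeasurableSet (Uset s))
    (r : S × U → ℝ) (hrm : Measurable r) (C : ℝ) (hrb : ∀ p, |r p| ≤ C)
    (α : ℝ)
    (V : S → ℝ) (hVm : Measurable V) (CV : ℝ) (hVb : ∀ s, |V s| ≤ CV)
    (hub : ∀ s, ∀ u ∈ Uset s, r (s, u) + α * ∫ s', V s' ∂(Q (s, u)) ≤ V s)
    (f : S → U) (hfm : Measurable f)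
    (hfopt : ∀ s, V s = r (s, f s) + α * ∫ s', V s' ∂(Q (s, f s))) :
    ∀ ν : Measure S, IsProbabilityMeasure ν →
      (∀ φ : Kernel S U, IsMarkovKernel φ → (∀ s, φ s (Uset s) = 1) →
        measurizedReward r φ ν + α * ∫ s, V s ∂(measurizedF Q φ ν) ≤ ∫ s, V s ∂ν) ∧
      ∫ s, V s ∂ν
        = measurizedReward r (Kernel.deterministic f hfm) ν
          + α * ∫ s, V s ∂(measurizedF Q (Kernel.deterministic f hfm) ν) := by
  intro ν hν
  have hGm := measurable_actionValue (Q := Q) hrm hVm α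
  refine ⟨fun φ hφ hφU => ?_, ?_⟩
  · rw [measurizedReward_add_integral_measurizedF φ ν hrm hrb hVm hVb]
    exact integral_compProd_le_of_forall_mem hUm hφU hGm hVm
      (integrable_of_abs_le hGm (abs_actionValue_le hrb hVb α))
      (integrable_of_abs_le hVm hVb) hub
  · rw [measurizedReward_add_integral_measurizedF _ ν hrm hrb hVm hVb,
      Measure.compProd_deterministic, integral_map (measurable_id'.prodMk hfm).aemeasurable
        hGm.aestronglyMeasurable]
    exact integral_congr_ae (ae_of_all _ hfopt)

/-- If the bounded measurable `V*` satisfies the discounted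
optimality equation with the supremum attained by a measurable selector `f*`,
then `V̄*(ν) = ∫ V* dν` satisfies the measurized optimality equation
`V̄*(ν) = sup_{φ ∈ Φ} { r̄(ν,φ) + α V̄*(F(ν,φ)) }`, with the supremum attained —
independently of `ν` — by the kernel `φ*` concentrated on `f*`. -/
theorem stmt8 {S U : Type*} [MeasurableSpace S] [MeasurableSpace U]
    (Q : Kernel (S × U) S) [IsMarkovKernel Q]
    (Uset : S → Set U) (hUm : ∀ s, MeasurableSet (Uset s))
    (r : S × U → ℝ) (hrm : Measurable r) (C : ℝ) (hrb : ∀ p, |r p| ≤ C)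
    (α : ℝ) (hα0 : 0 ≤ α) (hα1 : α < 1)
    (V : S → ℝ) (hVm : Measurable V) (CV : ℝ) (hVb : ∀ s, |V s| ≤ CV)
    (hub : ∀ s, ∀ u ∈ Uset s, r (s, u) + α * ∫ s', V s' ∂(Q (s, u)) ≤ V s)
    (f : S → U) (hfm : Measurable f) (hff : ∀ s, f s ∈ Uset s)
    (hfopt : ∀ s, V s = r (s, f s) + α * ∫ s', V s' ∂(Q (s, f s))) :
    ∀ ν : Measure S, IsProbabilityMeasure ν →
      (∀ φ : Kernel S U, IsMarkovKernel φ → (∀ s, φ s (Uset s) = 1) →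
        measurizedReward r φ ν + α * ∫ s, V s ∂(measurizedF Q φ ν) ≤ ∫ s, V s ∂ν) ∧
      ∫ s, V s ∂ν
        = measurizedReward r (Kernel.deterministic f hfm) ν
          + α * ∫ s, V s ∂(measurizedF Q (Kernel.deterministic f hfm) ν) :=
  stmt8_general Q Uset hUm r hrm C hrb α V hVm CV hVb hub f hfm hfopt
end

section
/- Let (ρ*, h̄*, φ*) satisfy the measurized average-reward optimality equations: ρ* + h̄*(ν) = sup_{φ ∈ Φ} { r̄(ν,φ) + h̄*(F(ν,φ)) } = r̄(ν,φ*) + h̄*(F(ν,φ*)) for all probability measures ν, with φ* independent of ν. Suppose ν_{φ*} is invariant for φ*, i.e., F(ν_{φ*}, φ*) = ν_{φ*}. Define the Lagrangian L(ν, φ, h̄) = r̄(ν,φ) + h̄(F(ν,φ)) − h̄(ν). Then: (a) L(ν, φ*, h̄*) = ρ* = r̄(ν_{φ*}, φ*) for all ν; (b) (ν_{φ*}, φ*, h̄*) is a saddle point: L(ν, φ, h̄*) ≤ L(ν_{φ*}, φ*, h̄*) ≤ L(ν_{φ*}, φ*, h̄) for all ν, φ, h̄; (c) (ν_{φ*},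 φ*) maximizes r̄(ν,φ) over all equilibria {(ν,φ) : F(ν,φ) = ν}. -/
open MeasureTheory ProbabilityTheory

/-- The Lagrangian of the equilibrium problem:
`L(ν, φ, h̄) = r̄(ν,φ) + h̄(F(ν,φ)) − h̄(ν)`. -/
noncomputable def lagrangianL {S U : Type*} [MeasurableSpace S] [MeasurableSpace U]
    (Q : Kernel (S × U) S) (r : S × U → ℝ)
    (ν : Measure S) (φ : Kernel S U) (h : Measure S → ℝ) : ℝ :=
  measurizedReward r φ ν + h (measurizedF Q φ ν) - h ν

section Lagrangian

variable {S U : Type*} [MeasurableSpace S] [MeasurableSpace U]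
  (Q : Kernel (S × U) S) (r : S × U → ℝ)

theorem lagrangianL_le_iff (ν : Measure S) (φ : Kernel S U) (h : Measure S → ℝ) (ρ : ℝ) :
    lagrangianL Q r ν φ h ≤ ρ ↔ measurizedReward r φ ν + h (measurizedF Q φ ν) ≤ ρ + h ν := by
  unfold lagrangianL
  constructor <;> intro _ <;> linarith

theorem lagrangianL_eq_iff (ν : Measure S) (φ : Kernel S U) (h : Measure S → ℝ) (ρ : ℝ) :
    lagrangianL Q r ν φ h = ρ ↔ ρ + h ν = measurizedReward r φ ν + h (measurizedF Q φ ν) := by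
  unfold lagrangianL
  constructor <;> intro _ <;> linarith

theorem lagrangianL_of_measurizedF_eq {ν : Measure S} {φ : Kernel S U}
    (hfix : measurizedF Q φ ν = ν) (h : Measure S → ℝ) :
    lagrangianL Q r ν φ h = measurizedReward r φ ν := by
  simp only [lagrangianL, hfix, add_sub_cancel_right]

end Lagrangian

theorem stmt12_general {S U : Type*} [MeasurableSpace S] [MeasurableSpace U]
    (Q : Kernel (S × U) S)
    (Uset : S → Set U)
    (r : S × U → ℝ)
    (ρ : ℝ) (hbar : Measure S → ℝ)
    (φstar : Kernel S U)
    (hsup : ∀ ν : Measure S, IsProbabilityMeasure ν →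
      ∀ φ : Kernel S U, IsMarkovKernel φ → (∀ s, φ s (Uset s) = 1) →
        measurizedReward r φ ν + hbar (measurizedF Q φ ν) ≤ ρ + hbar ν)
    (heq : ∀ ν : Measure S, IsProbabilityMeasure ν →
      ρ + hbar ν = measurizedReward r φstar ν + hbar (measurizedF Q φstar ν))
    (νstar : Measure S) [IsProbabilityMeasure νstar]
    (hinv : measurizedF Q φstar νstar = νstar) :
    (∀ ν : Measure S, IsProbabilityMeasure ν →
        lagrangianL Q r ν φstar hbar = ρ ∧ ρ = measurizedReward r φstar νstar) ∧
    ((∀ ν : Measure S, IsProbabilityMeasure ν →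
        ∀ φ : Kernel S U, IsMarkovKernel φ → (∀ s, φ s (Uset s) = 1) →
          lagrangianL Q r ν φ hbar ≤ lagrangianL Q r νstar φstar hbar) ∧
      (∀ h' : Measure S → ℝ,
          lagrangianL Q r νstar φstar hbar ≤ lagrangianL Q r νstar φstar h')) ∧
    (∀ ν : Measure S, IsProbabilityMeasure ν →
      ∀ φ : Kernel S U, IsMarkovKernel φ → (∀ s, φ s (Uset s) = 1) →
        measurizedF Q φ ν = ν →
          measurizedReward r φ ν ≤ measurizedReward r φstar νstar) := by
  have hL : ∀ ν : Measure S, IsProbabilityMeasure ν → lagrangianL Q r ν φstar hbar = ρ :=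
    fun ν hν => (lagrangianL_eq_iff Q r ν φstar hbar ρ).2 (heq ν hν)
  have hL_inv (h : Measure S → ℝ) :
      lagrangianL Q r νstar φstar h = measurizedReward r φstar νstar :=
    lagrangianL_of_measurizedF_eq Q r hinv h
  have hρ : ρ = measurizedReward r φstar νstar :=
    (hL νstar inferInstance).symm.trans (hL_inv hbar)
  refine ⟨fun ν hν => ⟨hL ν hν, hρ⟩, ⟨fun ν hν φ hφ hfeas => ?_, fun h' => ?_⟩,
    fun ν hν φ hφ hfeas hfix => ?_⟩
  · rw [hL νstar inferInstance]
    exact (lagrangianL_le_iff Q r ν φ hbar ρ).2 (hsup ν hν φ hφ hfeas)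
  · rw [hL_inv, hL_inv]
  · rw [← lagrangianL_of_measurizedF_eq Q r hfix hbar, ← hρ]
    exact (lagrangianL_le_iff Q r ν φ hbar ρ).2 (hsup ν hν φ hφ hfeas)

/-- Let `(ρ*, h̄*, φ*)` satisfy the measurized average-reward
optimality equations with `φ*` independent of `ν`, and let `ν_{φ*}` be invariant
for `φ*`.  Then (a) `L(ν, φ*, h̄*) = ρ* = r̄(ν_{φ*}, φ*)` for all `ν`;
(b) `(ν_{φ*}, φ*, h̄*)` is a saddle point of `L`; (c) `(ν_{φ*}, φ*)` maximizes
`r̄` over all equilibria. -/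
theorem stmt12 {S U : Type*} [MeasurableSpace S] [MeasurableSpace U]
    (Q : Kernel (S × U) S) [IsMarkovKernel Q]
    (Uset : S → Set U)
    (r : S × U → ℝ)
    (ρ : ℝ) (hbar : Measure S → ℝ)
    (φstar : Kernel S U) [IsMarkovKernel φstar] (hφfeas : ∀ s, φstar s (Uset s) = 1)
    (hsup : ∀ ν : Measure S, IsProbabilityMeasure ν →
      ∀ φ : Kernel S U, IsMarkovKernel φ → (∀ s, φ s (Uset s) = 1) →
        measurizedReward r φ ν + hbar (measurizedF Q φ ν) ≤ ρ + hbar ν)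
    (heq : ∀ ν : Measure S, IsProbabilityMeasure ν →
      ρ + hbar ν = measurizedReward r φstar ν + hbar (measurizedF Q φstar ν))
    (νstar : Measure S) [IsProbabilityMeasure νstar]
    (hinv : measurizedF Q φstar νstar = νstar) :
    (∀ ν : Measure S, IsProbabilityMeasure ν →
        lagrangianL Q r ν φstar hbar = ρ ∧ ρ = measurizedReward r φstar νstar) ∧
    ((∀ ν : Measure S, IsProbabilityMeasure ν →
        ∀ φ : Kernel S U, IsMarkovKernel φ → (∀ s, φ s (Uset s) = 1) →
          lagrangianL Q r ν φ hbar ≤ lagrangianL Q r νstar φstar hbar) ∧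
      (∀ h' : Measure S → ℝ,
          lagrangianL Q r νstar φstar hbar ≤ lagrangianL Q r νstar φstar h')) ∧
    (∀ ν : Measure S, IsProbabilityMeasure ν →
      ∀ φ : Kernel S U, IsMarkovKernel φ → (∀ s, φ s (Uset s) = 1) →
        measurizedF Q φ ν = ν →
          measurizedReward r φ ν ≤ measurizedReward r φstar νstar) :=
  stmt12_general Q Uset r ρ hbar φstar hsup heq νstar hinv
end
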